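/- Let α, γ > 0, β ∈ ℝ, Q = β/√(αγ) with -1 < Q < 0, and set A(z) = α z₁⁴ + 2β z₁² z₂² + γ z₂⁴. Then for all ξ, η ∈ ℝ²: Re A(ξ+iη) + 8(1-Q)/(1+Q)² · A(η) = (Q+1)[α(ξ₁² - ((3-Q)/(1+Q))η₁²)² + γ(ξ₂² - ((3-Q)/(1+Q))η₂²)²] - Q(√α ξ₁² - √γ ξ₂²)² - 2Q(√α ξ₁η₁ + √γ ξ₂η₂)² - 2Q√(αγ)(ξ₁η₂ + ξ₂η₁)² - Q((3-Q)/(1+Q))²(√α η₁² - √γ η₂²)². -/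

import Mathlib

open Complex

theorem re_quartic_form (α β γ ξ1 ξ2 η1 η2 : ℝ) :
    ((α : ℂ) * (ξ1 + η1 * I) ^ 4 + 2 * β * (ξ1 + η1 * I) ^ 2 * (ξ2 + η2 * I) ^ 2
        + γ * (ξ2 + η2 * I) ^ 4).re
      = α * (ξ1 ^ 4 - 6 * ξ1 ^ 2 * η1 ^ 2 + η1 ^ 4)
        + 2 * β * (ξ1 ^ 2 * ξ2 ^ 2 - ξ1 ^ 2 * η2 ^ 2 - ξ2 ^ 2 * η1 ^ 2
            - 4 * ξ1 * ξ2 * η1 * η2 + η1 ^ 2 * η2 ^ 2)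
        + γ * (ξ2 ^ 4 - 6 * ξ2 ^ 2 * η2 ^ 2 + η2 ^ 4) := by
  simp only [pow_succ, pow_zero, one_mul, add_re, mul_re, mul_im, add_im, I_re, I_im,
    ofReal_re, ofReal_im, re_ofNat, im_ofNat]
  ring

/-- The identity with `α = a²`, `γ = b²`, `β = Q a b`, where it is a rational identity in `Q`. -/
theorem quartic_form_sos_identity (a b Q ξ1 ξ2 η1 η2 : ℝ) (hQ : 1 + Q ≠ 0) :
    a ^ 2 * (ξ1 ^ 4 - 6 * ξ1 ^ 2 * η1 ^ 2 + η1 ^ 4)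
        + 2 * (Q * (a * b)) * (ξ1 ^ 2 * ξ2 ^ 2 - ξ1 ^ 2 * η2 ^ 2 - ξ2 ^ 2 * η1 ^ 2
            - 4 * ξ1 * ξ2 * η1 * η2 + η1 ^ 2 * η2 ^ 2)
        + b ^ 2 * (ξ2 ^ 4 - 6 * ξ2 ^ 2 * η2 ^ 2 + η2 ^ 4)
      + 8 * (1 - Q) / (1 + Q) ^ 2
          * (a ^ 2 * η1 ^ 4 + 2 * (Q * (a * b)) * η1 ^ 2 * η2 ^ 2 + b ^ 2 * η2 ^ 4)
    = (Q + 1) * (a ^ 2 * (ξ1 ^ 2 - (3 - Q) / (1 + Q) * η1 ^ 2) ^ 2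
          + b ^ 2 * (ξ2 ^ 2 - (3 - Q) / (1 + Q) * η2 ^ 2) ^ 2)
      - Q * (a * ξ1 ^ 2 - b * ξ2 ^ 2) ^ 2
      - 2 * Q * (a * ξ1 * η1 + b * ξ2 * η2) ^ 2
      - 2 * Q * (a * b) * (ξ1 * η2 + ξ2 * η1) ^ 2
      - Q * ((3 - Q) / (1 + Q)) ^ 2 * (a * η1 ^ 2 - b * η2 ^ 2) ^ 2 := by
  field_simp
  ring

theorem stmt3 (α β γ : ℝ) (hα : 0 < α) (hγ : 0 < γ)
    (Q : ℝ) (hQdef : Q = β / Real.sqrt (α * γ)) (hQ1 : -1 < Q)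
    (ξ1 ξ2 η1 η2 : ℝ) :
    ((α : ℂ) * (ξ1 + η1 * I) ^ 4 + 2 * β * (ξ1 + η1 * I) ^ 2 * (ξ2 + η2 * I) ^ 2
        + γ * (ξ2 + η2 * I) ^ 4).re
      + 8 * (1 - Q) / (1 + Q) ^ 2 * (α * η1 ^ 4 + 2 * β * η1 ^ 2 * η2 ^ 2 + γ * η2 ^ 4)
    = (Q + 1) * (α * (ξ1 ^ 2 - (3 - Q) / (1 + Q) * η1 ^ 2) ^ 2
          + γ * (ξ2 ^ 2 - (3 - Q) / (1 + Q) * η2 ^ 2) ^ 2)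
      - Q * (Real.sqrt α * ξ1 ^ 2 - Real.sqrt γ * ξ2 ^ 2) ^ 2
      - 2 * Q * (Real.sqrt α * ξ1 * η1 + Real.sqrt γ * ξ2 * η2) ^ 2
      - 2 * Q * Real.sqrt (α * γ) * (ξ1 * η2 + ξ2 * η1) ^ 2
      - Q * ((3 - Q) / (1 + Q)) ^ 2
          * (Real.sqrt α * η1 ^ 2 - Real.sqrt γ * η2 ^ 2) ^ 2 := by
  have hα_sq : Real.sqrt α ^ 2 = α := Real.sq_sqrt hα.le
  have hγ_sq : Real.sqrt γ ^ 2 = γ := Real.sq_sqrt hγ.le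
  have hsqrt_mul : Real.sqrt (α * γ) = Real.sqrt α * Real.sqrt γ := Real.sqrt_mul hα.le γ
  have hβ : β = Q * (Real.sqrt α * Real.sqrt γ) := by
    rw [hQdef, hsqrt_mul, div_mul_cancel₀]
    positivity
  have key := quartic_form_sos_identity (Real.sqrt α) (Real.sqrt γ) Q ξ1 ξ2 η1 η2
    (by linarith)
  rw [hα_sq, hγ_sq] at key
  rw [re_quartic_form, hsqrt_mul, hβ]
  exact key
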